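/- Let T ∈ A⊗B⊗C be a tensor and suppose (X,Y,Z) and (X',Y',Z') in End(A)×End(B)×End(C) are both compatible with T, meaning X∘_A T = Y∘_B T = Z∘_C T and X'∘_A T = Y'∘_B T = Z'∘_C T. Then (XX')∘_A T = (X'X)∘_A T, and similarly for the B and C components. -/
import Mathlib


open TensorProduct

noncomputable section

namespace Paper

variable {A B C : Type*} [AddCommGroup A] [Module ℂ A]
  [AddCommGroup B] [Module ℂ B] [AddCommGroup C] [Module ℂ C]

/-- Action of `X ∈ End(A)` on the `A`-factor: `X ∘_A T = (X ⊗ Id_B ⊗ Id_C)(T)`. -/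
def actA (X : Module.End ℂ A) : A ⊗[ℂ] (B ⊗[ℂ] C) →ₗ[ℂ] A ⊗[ℂ] (B ⊗[ℂ] C) :=
  TensorProduct.map X LinearMap.id

/-- Action of `Y ∈ End(B)` on the `B`-factor. -/
def actB (Y : Module.End ℂ B) : A ⊗[ℂ] (B ⊗[ℂ] C) →ₗ[ℂ] A ⊗[ℂ] (B ⊗[ℂ] C) :=
  TensorProduct.map LinearMap.id (TensorProduct.map Y LinearMap.id)

/-- Action of `Z ∈ End(C)` on the `C`-factor. -/
def actC (Z : Module.End ℂ C) : A ⊗[ℂ] (B ⊗[ℂ] C) →ₗ[ℂ] A ⊗[ℂ] (B ⊗[ℂ] C) :=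
  TensorProduct.map LinearMap.id (TensorProduct.map LinearMap.id Z)

/-- Contraction of the `A`-factor against `α ∈ A*`: `T ↦ T(α) ∈ B ⊗ C`. -/
def contrA (α : Module.Dual ℂ A) : A ⊗[ℂ] (B ⊗[ℂ] C) →ₗ[ℂ] B ⊗[ℂ] C :=
  (TensorProduct.lid ℂ (B ⊗[ℂ] C)).toLinearMap ∘ₗ TensorProduct.map α LinearMap.id

/-- Contraction of the `B`-factor against `β ∈ B*`: `T ↦ T(β) ∈ A ⊗ C`. -/
def contrB (β : Module.Dual ℂ B) : A ⊗[ℂ] (B ⊗[ℂ] C) →ₗ[ℂ] A ⊗[ℂ] C :=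
  TensorProduct.map LinearMap.id
    ((TensorProduct.lid ℂ C).toLinearMap ∘ₗ TensorProduct.map β LinearMap.id)

/-- Contraction of the `C`-factor against `γ ∈ C*`: `T ↦ T(γ) ∈ A ⊗ B`. -/
def contrC (γ : Module.Dual ℂ C) : A ⊗[ℂ] (B ⊗[ℂ] C) →ₗ[ℂ] A ⊗[ℂ] B :=
  TensorProduct.map LinearMap.id
    ((TensorProduct.rid ℂ B).toLinearMap ∘ₗ TensorProduct.map LinearMap.id γ)

/-- A tensor is concise if all three flattening maps are injective. -/
def Concise (T : A ⊗[ℂ] (B ⊗[ℂ] C)) : Prop :=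
  Function.Injective (fun α : Module.Dual ℂ A => contrA α T) ∧
  Function.Injective (fun β : Module.Dual ℂ B => contrB β T) ∧
  Function.Injective (fun γ : Module.Dual ℂ C => contrC γ T)

/-- View an element of `M ⊗ N` as a linear map `M* → N`. -/
def toHom {M N : Type*} [AddCommGroup M] [Module ℂ M] [AddCommGroup N] [Module ℂ N] :
    M ⊗[ℂ] N →ₗ[ℂ] (Module.Dual ℂ M →ₗ[ℂ] N) :=
  (dualTensorHom ℂ (Module.Dual ℂ M) N).comp
    (TensorProduct.map (Module.Dual.eval ℂ M) LinearMap.id)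

/-- A triple `(X,Y,Z)` is compatible with `T` if `X∘_A T = Y∘_B T = Z∘_C T`. -/
def Compat (T : A ⊗[ℂ] (B ⊗[ℂ] C))
    (p : Module.End ℂ A × Module.End ℂ B × Module.End ℂ C) : Prop :=
  actA p.1 T = actB p.2.1 T ∧ actB p.2.1 T = actC p.2.2 T

/-- The subspace `T(A*) ⊗ A ⊆ A ⊗ B ⊗ C`. -/
def spanA (T : A ⊗[ℂ] (B ⊗[ℂ] C)) : Submodule ℂ (A ⊗[ℂ] (B ⊗[ℂ] C)) :=
  Submodule.span ℂ {x | ∃ (a : A) (α : Module.Dual ℂ A), x = a ⊗ₜ[ℂ] contrA α T}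

/-- The subspace `T(B*) ⊗ B ⊆ A ⊗ B ⊗ C` (factors in the correct positions). -/
def spanB (T : A ⊗[ℂ] (B ⊗[ℂ] C)) : Submodule ℂ (A ⊗[ℂ] (B ⊗[ℂ] C)) :=
  Submodule.span ℂ {x | ∃ (b : B) (β : Module.Dual ℂ B),
    x = (TensorProduct.leftComm ℂ B A C) (b ⊗ₜ[ℂ] contrB β T)}

/-- The subspace `T(C*) ⊗ C ⊆ A ⊗ B ⊗ C` (factors in the correct positions). -/
def spanC (T : A ⊗[ℂ] (B ⊗[ℂ] C)) : Submodule ℂ (A ⊗[ℂ] (B ⊗[ℂ] C)) :=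
  Submodule.span ℂ {x | ∃ (c : C) (γ : Module.Dual ℂ C),
    x = (TensorProduct.congr (LinearEquiv.refl ℂ A) (TensorProduct.comm ℂ C B))
      ((TensorProduct.leftComm ℂ C A B) (c ⊗ₜ[ℂ] contrC γ T))}

/-- The triple intersection `(T(A*)⊗A) ∩ (T(B*)⊗B) ∩ (T(C*)⊗C)`. -/
def tripleInt (T : A ⊗[ℂ] (B ⊗[ℂ] C)) : Submodule ℂ (A ⊗[ℂ] (B ⊗[ℂ] C)) :=
  spanA T ⊓ spanB T ⊓ spanC T

end Paper


namespace Paper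

variable {A B C : Type*} [AddCommGroup A] [Module ℂ A]
  [AddCommGroup B] [Module ℂ B] [AddCommGroup C] [Module ℂ C]

lemma actA_mul (X X' : Module.End ℂ A) (T : A ⊗[ℂ] (B ⊗[ℂ] C)) :
    actA (X * X') T = actA X (actA X' T) := by
  simp only [actA]
  rw [show TensorProduct.map (X * X') (LinearMap.id : B ⊗[ℂ] C →ₗ[ℂ] B ⊗[ℂ] C)
      = (TensorProduct.map X LinearMap.id).comp (TensorProduct.map X' LinearMap.id) from
    by rw [← TensorProduct.map_comp]; rfl]
  rfl

lemma actB_mul (Y Y' : Module.End ℂ B) (T : A ⊗[ℂ] (B ⊗[ℂ] C)) :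
    actB (Y * Y') T = actB Y (actB Y' T) := by
  simp only [actB]
  rw [show TensorProduct.map (LinearMap.id : A →ₗ[ℂ] A) (TensorProduct.map (Y * Y') LinearMap.id)
      = (TensorProduct.map LinearMap.id (TensorProduct.map Y LinearMap.id)).comp
        (TensorProduct.map LinearMap.id (TensorProduct.map Y' LinearMap.id)) from
    by rw [← TensorProduct.map_comp, ← TensorProduct.map_comp]; rfl]
  rfl

lemma actC_mul (Z Z' : Module.End ℂ C) (T : A ⊗[ℂ] (B ⊗[ℂ] C)) :
    actC (Z * Z') T = actC Z (actC Z' T) := by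
  simp only [actC]
  rw [show TensorProduct.map (LinearMap.id : A →ₗ[ℂ] A) (TensorProduct.map LinearMap.id (Z * Z'))
      = (TensorProduct.map LinearMap.id (TensorProduct.map LinearMap.id Z)).comp
        (TensorProduct.map LinearMap.id (TensorProduct.map LinearMap.id Z')) from
    by rw [← TensorProduct.map_comp, ← TensorProduct.map_comp]; rfl]
  rfl

lemma actA_actB_comm (X : Module.End ℂ A) (Y : Module.End ℂ B) (T : A ⊗[ℂ] (B ⊗[ℂ] C)) :
    actA X (actB Y T) = actB Y (actA X T) := by
  have h : (actA X).comp (actB Y) = (actB (A := A) (C := C) Y).comp (actA X) := by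
    simp only [actA, actB, ← TensorProduct.map_comp, LinearMap.comp_id, LinearMap.id_comp]
  exact congrFun (congrArg DFunLike.coe h) T

lemma actA_actC_comm (X : Module.End ℂ A) (Z : Module.End ℂ C) (T : A ⊗[ℂ] (B ⊗[ℂ] C)) :
    actA X (actC Z T) = actC Z (actA X T) := by
  have h : (actA X).comp (actC Z) = (actC (A := A) (B := B) Z).comp (actA X) := by
    simp only [actA, actC, ← TensorProduct.map_comp, LinearMap.comp_id, LinearMap.id_comp]
  exact congrFun (congrArg DFunLike.coe h) T

lemma actB_actC_comm (Y : Module.End ℂ B) (Z : Module.End ℂ C) (T : A ⊗[ℂ] (B ⊗[ℂ] C)) :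
    actB Y (actC Z T) = actC Z (actB Y T) := by
  have h : (actB Y).comp (actC Z) = (actC (A := A) (B := B) Z).comp (actB Y) := by
    simp only [actB, actC, ← TensorProduct.map_comp, LinearMap.comp_id, LinearMap.id_comp]
  exact congrFun (congrArg DFunLike.coe h) T

end Paper

set_option maxHeartbeats 1000000 in
open Paper in
/-- for compatible triples, `(XX')∘_A T = (X'X)∘_A T`, and similarly for B, C. -/
theorem stmt3 {A B C : Type*} [AddCommGroup A] [Module ℂ A] [AddCommGroup B] [Module ℂ B]
    [AddCommGroup C] [Module ℂ C] [FiniteDimensional ℂ A] [FiniteDimensional ℂ B]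
    [FiniteDimensional ℂ C] (T : A ⊗[ℂ] (B ⊗[ℂ] C))
    (p q : Module.End ℂ A × Module.End ℂ B × Module.End ℂ C)
    (hp : Compat T p) (hq : Compat T q) :
    actA (p.1 * q.1) T = actA (q.1 * p.1) T ∧
    actB (p.2.1 * q.2.1) T = actB (q.2.1 * p.2.1) T ∧
    actC (p.2.2 * q.2.2) T = actC (q.2.2 * p.2.2) T := by
  obtain ⟨X, Y, Z⟩ := p
  obtain ⟨X', Y', Z'⟩ := q
  obtain ⟨hpAB, hpBC⟩ := hp
  obtain ⟨hqAB, hqBC⟩ := hq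
  simp only at hpAB hpBC hqAB hqBC ⊢
  refine ⟨?_, ?_, ?_⟩
  · rw [actA_mul, actA_mul]
    calc actA X (actA X' T) = actA X (actC Z' T) := by rw [hqAB, hqBC]
      _ = actC Z' (actA X T) := actA_actC_comm X Z' T
      _ = actC Z' (actB Y T) := by rw [hpAB]
      _ = actB Y (actC Z' T) := (actB_actC_comm Y Z' T).symm
      _ = actB Y (actA X' T) := by rw [hqAB, hqBC]
      _ = actA X' (actB Y T) := (actA_actB_comm X' Y T).symm
      _ = actA X' (actA X T) := by rw [hpAB]
  · rw [actB_mul, actB_mul]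
    calc actB Y (actB Y' T) = actB Y (actC Z' T) := by rw [hqBC]
      _ = actC Z' (actB Y T) := actB_actC_comm Y Z' T
      _ = actC Z' (actA X T) := by rw [hpAB]
      _ = actA X (actC Z' T) := (actA_actC_comm X Z' T).symm
      _ = actA X (actB Y' T) := by rw [hqBC]
      _ = actB Y' (actA X T) := actA_actB_comm X Y' T
      _ = actB Y' (actB Y T) := by rw [hpAB]
  · rw [actC_mul, actC_mul]
    calc actC Z (actC Z' T) = actC Z (actA X' T) := by rw [hqAB, hqBC]
      _ = actA X' (actC Z T) := (actA_actC_comm X' Z T).symm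
      _ = actA X' (actB Y T) := by rw [hpBC]
      _ = actB Y (actA X' T) := actA_actB_comm X' Y T
      _ = actB Y (actC Z' T) := by rw [hqAB, hqBC]
      _ = actC Z' (actB Y T) := actB_actC_comm Y Z' T
      _ = actC Z' (actC Z T) := by rw [hpBC]
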